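/- arXiv:2101.02474 — 7 statements merged into one kernel-verified Lean document; each statement's English description precedes it below -/
import Mathlib

section
/- The full Lorentz profile integrates to 1 over [0,∞): ∫₀^∞ (4/π)·γν²/((ν₀²−ν²)² + 4γ²ν²) dν = 1, for γ > 0 and ν₀ > 0. -/
/-!
Since `(ν₀² - ν²)² + 4γ²ν² = ν² ((ν - ν₀²/ν)² + (2γ)²)`, the integrand is
`(4γ/π) F (ν - ν₀²/ν)` with `F u = (u² + (2γ)²)⁻¹` even. For even integrable `F` and
`a > 0`, Glasser's substitution `u = x - a/x` maps `(0, ∞)` bijectively onto `ℝ` with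
`du = (1 + a/x²) dx`, and the inversion `x ↦ a/x` shows that the `a/x²` part contributes
as much as the `1` part; hence `∫₀^∞ F (x - a/x) dx = ½ ∫ F = π / (4γ)`.
-/

open MeasureTheory Real Set

section GlasserHalfLine

variable {E : Type*} [NormedAddCommGroup E] [NormedSpace ℝ E] {a : ℝ}

lemma hasDerivAt_sub_const_div (a : ℝ) {x : ℝ} (hx : x ≠ 0) :
    HasDerivAt (fun x => x - a / x) (1 + a / x ^ 2) x := by
  simpa [div_eq_mul_inv, sub_eq_add_neg] using
    (hasDerivAt_id x).fun_sub ((hasDerivAt_inv hx).const_mul a)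

lemma hasDerivAt_const_div (a : ℝ) {x : ℝ} (hx : x ≠ 0) :
    HasDerivAt (fun x => a / x) (-(a / x ^ 2)) x := by
  simpa [div_eq_mul_inv] using (hasDerivAt_inv hx).const_mul a

lemma strictMonoOn_sub_const_div (ha : 0 ≤ a) : StrictMonoOn (fun x => x - a / x) (Ioi 0) :=
  fun _ hx _ _ hxy => by linarith [div_le_div_of_nonneg_left ha hx hxy.le]

lemma image_sub_const_div_Ioi (ha : 0 < a) : (fun x => x - a / x) '' Ioi 0 = univ := by
  refine eq_univ_of_forall fun y => ?_
  have hs : |y| < √(y ^ 2 + 4 * a) := by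
    rw [← sqrt_sq_eq_abs]
    exact sqrt_lt_sqrt (sq_nonneg y) (by linarith)
  have hroot : 0 < y + √(y ^ 2 + 4 * a) := by linarith [neg_abs_le y]
  refine ⟨(y + √(y ^ 2 + 4 * a)) / 2, mem_Ioi.2 (by positivity), ?_⟩
  field_simp
  nlinarith [sq_sqrt (show 0 ≤ y ^ 2 + 4 * a by positivity)]

lemma injOn_const_div (ha : a ≠ 0) : InjOn (fun x => a / x) (Ioi 0) := fun x _ y _ h => by
  simpa [div_div_cancel₀ ha] using congrArg (a / ·) h

lemma image_const_div_Ioi (ha : 0 < a) : (fun x => a / x) '' Ioi 0 = Ioi 0 := by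
  refine Subset.antisymm (image_subset_iff.2 fun x hx => div_pos ha hx) fun y hy => ?_
  exact ⟨a / y, div_pos ha hy, div_div_cancel₀ ha.ne'⟩

lemma integral_Ioi_one_add_div_sq_smul_comp_sub_const_div (ha : 0 < a) (F : ℝ → E) :
    ∫ x in Ioi 0, (1 + a / x ^ 2) • F (x - a / x) = ∫ u, F u := by
  have hderiv : ∀ x ∈ Ioi (0 : ℝ),
      HasDerivWithinAt (fun x => x - a / x) (1 + a / x ^ 2) (Ioi 0) x :=
    fun x hx => (hasDerivAt_sub_const_div a hx.ne').hasDerivWithinAt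
  have := integral_image_eq_integral_abs_deriv_smul measurableSet_Ioi hderiv
    (strictMonoOn_sub_const_div ha.le).injOn F
  rw [image_sub_const_div_Ioi ha, setIntegral_univ] at this
  rw [this]
  refine setIntegral_congr_fun measurableSet_Ioi fun x _ => ?_
  rw [abs_of_pos (by positivity)]

lemma integrableOn_Ioi_one_add_div_sq_smul_comp_sub_const_div (ha : 0 < a) {F : ℝ → E}
    (hF : Integrable F) :
    IntegrableOn (fun x => (1 + a / x ^ 2) • F (x - a / x)) (Ioi 0) := by
  have hderiv : ∀ x ∈ Ioi (0 : ℝ),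
      HasDerivWithinAt (fun x => x - a / x) (1 + a / x ^ 2) (Ioi 0) x :=
    fun x hx => (hasDerivAt_sub_const_div a hx.ne').hasDerivWithinAt
  have := (integrableOn_image_iff_integrableOn_abs_deriv_smul measurableSet_Ioi hderiv
      (strictMonoOn_sub_const_div ha.le).injOn F).1
      (by rw [image_sub_const_div_Ioi ha]; exact hF.integrableOn)
  refine this.congr_fun (fun x _ => ?_) measurableSet_Ioi
  simp only
  rw [abs_of_pos (by positivity)]

lemma integral_Ioi_div_sq_smul_comp_const_div (ha : 0 < a) (G : ℝ → E) :
    ∫ x in Ioi 0, (a / x ^ 2) • G (a / x) = ∫ y in Ioi 0, G y := by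
  have hderiv : ∀ x ∈ Ioi (0 : ℝ),
      HasDerivWithinAt (fun x => a / x) (-(a / x ^ 2)) (Ioi 0) x :=
    fun x hx => (hasDerivAt_const_div a hx.ne').hasDerivWithinAt
  have := integral_image_eq_integral_abs_deriv_smul measurableSet_Ioi hderiv
    (injOn_const_div ha.ne') G
  rw [image_const_div_Ioi ha] at this
  rw [this]
  refine setIntegral_congr_fun measurableSet_Ioi fun x (hx : 0 < x) => ?_
  rw [abs_neg, abs_of_pos (by positivity)]

theorem integral_Ioi_comp_sub_const_div_of_even (ha : 0 < a) {F : ℝ → E} (hF : Integrable F)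
    (heven : ∀ u, F (-u) = F u) :
    ∫ x in Ioi 0, F (x - a / x) = (2 : ℝ)⁻¹ • ∫ u, F u := by
  set h := fun x : ℝ => (1 + a / x ^ 2) • F (x - a / x)
  have hh : IntegrableOn h (Ioi 0) :=
    integrableOn_Ioi_one_add_div_sq_smul_comp_sub_const_div ha hF
  have hcont : ContinuousOn (fun x : ℝ => (1 + a / x ^ 2)⁻¹) (Ioi 0) :=
    (continuousOn_const.add (continuousOn_const.div (continuous_pow 2).continuousOn
      fun x (hx : 0 < x) => by positivity)).inv₀ fun x (hx : 0 < x) =>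
      (by positivity : 0 < 1 + a / x ^ 2).ne'
  have hF₁ : IntegrableOn (fun x => F (x - a / x)) (Ioi 0) := by
    refine IntegrableOn.congr_fun
      (hh.bdd_smul 1 (hcont.aestronglyMeasurable measurableSet_Ioi) ?_)
      (fun x (hx : 0 < x) => ?_) measurableSet_Ioi
    · refine ae_restrict_of_forall_mem measurableSet_Ioi fun x (hx : 0 < x) => ?_
      rw [norm_inv, Real.norm_of_nonneg (by positivity)]
      exact inv_le_one_of_one_le₀ (le_add_of_nonneg_right (by positivity))
    · change (1 + a / x ^ 2)⁻¹ • (1 + a / x ^ 2) • F (x - a / x) = _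
      rw [inv_smul_smul₀ (by positivity)]
  have hF₂ : IntegrableOn (fun x => (a / x ^ 2) • F (x - a / x)) (Ioi 0) :=
    (hh.sub hF₁).congr_fun (fun x _ => by simp [h, add_smul]) measurableSet_Ioi
  have hsymm : ∫ x in Ioi 0, (a / x ^ 2) • F (x - a / x) = ∫ x in Ioi 0, F (x - a / x) := by
    -- `x ↦ a / x` turns `x - a / x` into its negative
    rw [← integral_Ioi_div_sq_smul_comp_const_div ha (fun y => F (y - a / y))]
    refine setIntegral_congr_fun measurableSet_Ioi fun x _ => ?_
    rw [div_div_cancel₀ ha.ne', ← heven (x - a / x), neg_sub]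
  rw [← integral_Ioi_one_add_div_sq_smul_comp_sub_const_div ha, eq_inv_smul_iff₀ two_ne_zero]
  simp only [add_smul, one_smul]
  rw [integral_add hF₁ hF₂, hsymm, two_smul]

end GlasserHalfLine

lemma inv_sq_add_sq_eq {c : ℝ} (hc : c ≠ 0) (u : ℝ) :
    (u ^ 2 + c ^ 2)⁻¹ = (c ^ 2)⁻¹ * (1 + (u / c) ^ 2)⁻¹ := by
  field_simp
  ring

lemma integrable_inv_sq_add_sq {c : ℝ} (hc : c ≠ 0) :
    Integrable fun u : ℝ => (u ^ 2 + c ^ 2)⁻¹ := by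
  simp_rw [inv_sq_add_sq_eq hc, div_eq_mul_inv]
  exact (integrable_inv_one_add_sq.comp_mul_right' (inv_ne_zero hc)).const_mul _

lemma integral_univ_inv_sq_add_sq {c : ℝ} (hc : 0 < c) :
    ∫ u : ℝ, (u ^ 2 + c ^ 2)⁻¹ = π / c := by
  simp_rw [inv_sq_add_sq_eq hc.ne', integral_const_mul,
    Measure.integral_comp_div (fun u => (1 + u ^ 2)⁻¹), integral_univ_inv_one_add_sq,
    smul_eq_mul, abs_of_pos hc]
  field_simp

lemma full_lorentz_profile_eq {γ ν₀ ν : ℝ} (hν : 0 < ν) :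
    (4 / π) * (γ * ν ^ 2) / ((ν₀ ^ 2 - ν ^ 2) ^ 2 + 4 * γ ^ 2 * ν ^ 2)
      = 4 * γ / π * ((ν - ν₀ ^ 2 / ν) ^ 2 + (2 * γ) ^ 2)⁻¹ := by
  field_simp
  ring

theorem full_lorentz_normalized (γ ν₀ : ℝ) (hγ : 0 < γ) (hν₀ : 0 < ν₀) :
    ∫ ν in Set.Ioi (0 : ℝ),
      (4 / Real.pi) * (γ * ν ^ 2) / ((ν₀ ^ 2 - ν ^ 2) ^ 2 + 4 * γ ^ 2 * ν ^ 2) = 1 := by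
  rw [setIntegral_congr_fun measurableSet_Ioi fun ν hν => full_lorentz_profile_eq hν,
    integral_const_mul, integral_Ioi_comp_sub_const_div_of_even (pow_pos hν₀ 2)
      (integrable_inv_sq_add_sq (by positivity)) fun u => by rw [neg_sq],
    integral_univ_inv_sq_add_sq (by positivity), smul_eq_mul]
  field_simp
  norm_num
end

section
/- The function h(z) = (2/π)·z/(ν₀² − z² − 2iγz) is a Herglotz function: it is holomorphic on the open upper half-plane {z ∈ ℂ : Im z > 0} and satisfies Im h(z) ≥ 0 there, for γ > 0 and ν₀ > 0. -/
/-!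
Writing `D(z) = ν₀² - z² - 2iγz`, a direct computation gives
`Im (z · conj D(z)) = (Im z + 2γ)|z|² + ν₀² Im z`, which is positive on the upper half-plane
when `γ ≥ 0`. Hence `D` has no zero there, and `Im (z / D(z)) = Im (z · conj D(z)) / |D(z)|² > 0`.
-/

open Complex

open ComplexConjugate

lemma im_div_eq_im_mul_conj_div_normSq (z w : ℂ) : (z / w).im = (z * conj w).im / normSq w := by
  rw [div_eq_mul_inv, inv_def, ← mul_assoc, im_mul_ofReal, div_eq_mul_inv]

lemma im_mul_conj_lorentz_denom (γ ν₀ : ℝ) (z : ℂ) :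
    (z * conj ((ν₀ : ℂ) ^ 2 - z ^ 2 - 2 * I * γ * z)).im
      = (z.im + 2 * γ) * normSq z + ν₀ ^ 2 * z.im := by
  simp only [mul_im, mul_re, conj_re, conj_im, sub_re, sub_im, pow_two, normSq_apply, ofReal_re,
    ofReal_im, I_re, I_im, re_ofNat, im_ofNat]
  ring

section LorentzDenominator

variable {γ : ℝ} (ν₀ : ℝ) {z : ℂ}

lemma im_mul_conj_lorentz_denom_pos (hγ : 0 ≤ γ) (hz : 0 < z.im) :
    0 < (z * conj ((ν₀ : ℂ) ^ 2 - z ^ 2 - 2 * I * γ * z)).im := by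
  have hz₀ : 0 < normSq z := normSq_pos.2 fun h => by simp [h] at hz
  rw [im_mul_conj_lorentz_denom]
  exact add_pos_of_pos_of_nonneg (mul_pos (by linarith) hz₀) (by positivity)

lemma lorentz_denom_ne_zero (hγ : 0 ≤ γ) (hz : 0 < z.im) :
    (ν₀ : ℂ) ^ 2 - z ^ 2 - 2 * I * γ * z ≠ 0 := fun h => by
  simpa [h] using im_mul_conj_lorentz_denom_pos ν₀ hγ hz

lemma im_div_lorentz_denom_pos (hγ : 0 ≤ γ) (hz : 0 < z.im) :
    0 < (z / ((ν₀ : ℂ) ^ 2 - z ^ 2 - 2 * I * γ * z)).im := by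
  rw [im_div_eq_im_mul_conj_div_normSq]
  exact div_pos (im_mul_conj_lorentz_denom_pos ν₀ hγ hz)
    (normSq_pos.2 (lorentz_denom_ne_zero ν₀ hγ hz))

end LorentzDenominator

theorem full_lorentz_herglotz_general (γ ν₀ : ℝ) (hγ : 0 < γ) :
    DifferentiableOn ℂ
      (fun z : ℂ => (2 / Real.pi : ℂ) * z / ((ν₀ : ℂ) ^ 2 - z ^ 2 - 2 * I * (γ : ℂ) * z))
      {z : ℂ | 0 < z.im} ∧
    ∀ z : ℂ, 0 < z.im →
      0 ≤ ((2 / Real.pi : ℂ) * z / ((ν₀ : ℂ) ^ 2 - z ^ 2 - 2 * I * (γ : ℂ) * z)).im := by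
  refine ⟨DifferentiableOn.div (by fun_prop) (by fun_prop)
    fun z hz => lorentz_denom_ne_zero ν₀ hγ.le hz, fun z hz => ?_⟩
  have hc : (2 / Real.pi : ℂ) = ((2 / Real.pi : ℝ) : ℂ) := by push_cast; rfl
  rw [mul_div_assoc, hc, im_ofReal_mul]
  exact mul_nonneg (by positivity) (im_div_lorentz_denom_pos ν₀ hγ.le hz).le

theorem full_lorentz_herglotz (γ ν₀ : ℝ) (hγ : 0 < γ) (hν₀ : 0 < ν₀) :
    DifferentiableOn ℂ
      (fun z : ℂ => (2 / Real.pi : ℂ) * z / ((ν₀ : ℂ) ^ 2 - z ^ 2 - 2 * I * (γ : ℂ) * z))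
      {z : ℂ | 0 < z.im} ∧
    ∀ z : ℂ, 0 < z.im →
      0 ≤ ((2 / Real.pi : ℂ) * z / ((ν₀ : ℂ) ^ 2 - z ^ 2 - 2 * I * (γ : ℂ) * z)).im :=
  full_lorentz_herglotz_general γ ν₀ hγ
end

section
/- For fixed B > 0 and γ > 0, the relative error between the full Lorentz and Lorentz profiles converges uniformly to zero on the band |ν − ν₀| ≤ B as ν₀ → ∞: for every ε > 0 there exists N such that for all ν₀ > N and all ν with |ν − ν₀| ≤ B and ν > 0, |f_FL(ν) − f_L(ν−ν₀)| ≤ ε·f_L(ν−ν₀). -/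
/-!
With `x = ν - ν₀`, the numerator of `f_FL(ν) - f_L(x)` over the common denominator is
`4ν²(x² + γ²) - (ν₀² - ν²)² - 4γ²ν² = x²(4ν² - (ν + ν₀)²) = x³(3ν + ν₀)`, so the relative error is
`x³(3ν + ν₀) / ((ν₀² - ν²)² + 4γ²ν²)`. On the band `|x| ≤ B` its size is at most
`B³ · 5ν / (4γ²ν²) = 5B³ / (4γ²ν)`, which tends to zero uniformly as `ν₀ → ∞`.
-/

open Real

noncomputable def lorentz (γ x : ℝ) : ℝ := (1 / π) * γ / (x ^ 2 + γ ^ 2)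

noncomputable def fullLorentz (γ ν₀ ν : ℝ) : ℝ :=
  (4 / π) * (γ * ν ^ 2) / ((ν₀ ^ 2 - ν ^ 2) ^ 2 + 4 * γ ^ 2 * ν ^ 2)

noncomputable def fullLorentzRelError (γ ν₀ ν : ℝ) : ℝ :=
  (ν - ν₀) ^ 3 * (3 * ν + ν₀) / ((ν₀ ^ 2 - ν ^ 2) ^ 2 + 4 * γ ^ 2 * ν ^ 2)

lemma fullLorentz_sub_lorentz {γ ν : ℝ} (hγ : γ ≠ 0) (hν : ν ≠ 0) (ν₀ : ℝ) :
    fullLorentz γ ν₀ ν - lorentz γ (ν - ν₀) =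
      lorentz γ (ν - ν₀) * fullLorentzRelError γ ν₀ ν := by
  have : (ν₀ ^ 2 - ν ^ 2) ^ 2 + 4 * γ ^ 2 * ν ^ 2 ≠ 0 := by positivity
  have : (ν - ν₀) ^ 2 + γ ^ 2 ≠ 0 := by positivity
  unfold fullLorentz lorentz fullLorentzRelError
  field_simp
  ring

lemma abs_fullLorentzRelError_le {γ ν₀ ν B : ℝ} (hγ : γ ≠ 0) (hν₀ : 0 ≤ ν₀) (hν : 0 < ν)
    (hBν : B ≤ ν) (hband : |ν - ν₀| ≤ B) :
    |fullLorentzRelError γ ν₀ ν| ≤ 5 * B ^ 3 / (4 * γ ^ 2 * ν) := by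
  have hB : 0 ≤ B := (abs_nonneg _).trans hband
  have hnum : |(ν - ν₀) ^ 3 * (3 * ν + ν₀)| ≤ B ^ 3 * (5 * ν) := by
    rw [abs_mul, abs_pow, abs_of_nonneg (by linarith : 0 ≤ 3 * ν + ν₀)]
    gcongr
    linarith [(abs_le.mp hband).1]
  have hden : 4 * γ ^ 2 * ν ^ 2 ≤ (ν₀ ^ 2 - ν ^ 2) ^ 2 + 4 * γ ^ 2 * ν ^ 2 := by
    nlinarith [sq_nonneg (ν₀ ^ 2 - ν ^ 2)]
  calc |fullLorentzRelError γ ν₀ ν|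
      = |(ν - ν₀) ^ 3 * (3 * ν + ν₀)| / ((ν₀ ^ 2 - ν ^ 2) ^ 2 + 4 * γ ^ 2 * ν ^ 2) := by
        rw [fullLorentzRelError, abs_div, abs_of_pos (a := _ + _) (by positivity)]
    _ ≤ B ^ 3 * (5 * ν) / (4 * γ ^ 2 * ν ^ 2) := by gcongr
    _ = 5 * B ^ 3 / (4 * γ ^ 2 * ν) := by field_simp

theorem full_lorentz_uniform_convergence_general (γ B : ℝ) (hγ : 0 < γ) :
    ∀ ε > 0, ∃ N : ℝ, ∀ ν₀ > N, ∀ ν : ℝ, |ν - ν₀| ≤ B → 0 < ν →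
      |(4 / Real.pi) * (γ * ν ^ 2) / ((ν₀ ^ 2 - ν ^ 2) ^ 2 + 4 * γ ^ 2 * ν ^ 2)
        - (1 / Real.pi) * γ / ((ν - ν₀) ^ 2 + γ ^ 2)|
      ≤ ε * ((1 / Real.pi) * γ / ((ν - ν₀) ^ 2 + γ ^ 2)) := by
  intro ε hε
  refine ⟨2 * B + 5 * B ^ 3 / (4 * γ ^ 2 * ε), fun ν₀ hν₀ ν hband hν => ?_⟩
  show |fullLorentz γ ν₀ ν - lorentz γ (ν - ν₀)| ≤ ε * lorentz γ (ν - ν₀)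
  have hB : 0 ≤ B := (abs_nonneg _).trans hband
  have hC : 0 ≤ 5 * B ^ 3 / (4 * γ ^ 2 * ε) := by positivity
  have hνlarge : B + 5 * B ^ 3 / (4 * γ ^ 2 * ε) ≤ ν := by linarith [(abs_le.mp hband).1]
  have hν₀pos : 0 ≤ ν₀ := by linarith
  have hBν : B ≤ ν := by linarith
  have hsmall : 5 * B ^ 3 / (4 * γ ^ 2 * ν) ≤ ε := by
    have hCν : 5 * B ^ 3 / (4 * γ ^ 2 * ε) ≤ ν := by linarith
    rw [div_le_iff₀ (by positivity)] at hCν ⊢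
    linarith
  have hlorentz : 0 < lorentz γ (ν - ν₀) := by unfold lorentz; positivity
  rw [fullLorentz_sub_lorentz hγ.ne' hν.ne', abs_mul, abs_of_pos hlorentz, mul_comm ε]
  exact mul_le_mul_of_nonneg_left
    ((abs_fullLorentzRelError_le hγ.ne' hν₀pos hν hBν hband).trans hsmall) hlorentz.le

theorem full_lorentz_uniform_convergence (γ B : ℝ) (hγ : 0 < γ) (hB : 0 < B) :
    ∀ ε > 0, ∃ N : ℝ, ∀ ν₀ > N, ∀ ν : ℝ, |ν - ν₀| ≤ B → 0 < ν →
      |(4 / Real.pi) * (γ * ν ^ 2) / ((ν₀ ^ 2 - ν ^ 2) ^ 2 + 4 * γ ^ 2 * ν ^ 2)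
        - (1 / Real.pi) * γ / ((ν - ν₀) ^ 2 + γ ^ 2)|
      ≤ ε * ((1 / Real.pi) * γ / ((ν - ν₀) ^ 2 + γ ^ 2)) :=
  full_lorentz_uniform_convergence_general γ B hγ
end

section
/- Uniform error bound for the normalized Voigt relative error: for γ̃ > 0, 0 < a < 1, and all ν̃ ∈ ℝ, |(1/√π)·∫_{−∞}^{∞} e^{−t²}·t(2ν̃−t)/(γ̃²+(ν̃−t)²) dt| ≤ (1/(γ̃²+ν̃²))·(1/2 + |ν̃|/√π) + (1/(γ̃²+(1−a)²ν̃²))·((2+a)|ν̃|/(2√π)) + (1/γ̃²)·((2−a)|ν̃|/(2√π))·e^{−a²ν̃²}. -/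
/-!
By the symmetry `(ν, t) ↦ (-ν, -t)` we may take `ν ≥ 0`. On each of `t ≤ 0`, `0 < t ≤ aν`,
`aν < t ≤ 2ν`, `t > 2ν` the numerator `|t (2ν - t)|` is at most a multiple of `t` or `t²`, and
the denominator `γ² + (ν - t)²` is at least `γ² + ν²`, `γ² + (1 - a)²ν²`, `γ²`, `γ² + ν²`
respectively. Enlarging each region to a half-line leaves only the Gaussian moments
`∫_c^∞ t e^{-t²} = e^{-c²}/2` and `∫_0^∞ t² e^{-t²} = √π/4`.
-/

open MeasureTheory Set Real Filter

lemma integrable_mul_exp_neg_sq : Integrable fun t : ℝ => t * exp (-t ^ 2) := by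
  simpa using integrable_mul_exp_neg_mul_sq one_pos

lemma integrable_sq_mul_exp_neg_sq : Integrable fun t : ℝ => t ^ 2 * exp (-t ^ 2) := by
  simpa using integrable_rpow_mul_exp_neg_mul_sq one_pos (s := 2) (by norm_num)

lemma integral_Ioi_mul_exp_neg_sq (c : ℝ) :
    ∫ t in Ioi c, t * exp (-t ^ 2) = exp (-c ^ 2) / 2 := by
  have hderiv (t : ℝ) : HasDerivAt (fun t => -exp (-t ^ 2) / 2) (t * exp (-t ^ 2)) t := by
    have hsq : HasDerivAt (fun t : ℝ => -t ^ 2) (-(2 * t ^ 1)) t := (hasDerivAt_pow 2 t).neg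
    exact (hsq.exp.neg.div_const 2).congr_deriv (by ring)
  have hlim : Tendsto (fun t : ℝ => -exp (-t ^ 2) / 2) atTop (nhds (-0 / 2)) :=
    (tendsto_exp_atBot.comp (tendsto_neg_atBot_iff.2
      (tendsto_pow_atTop two_ne_zero))).neg.div_const 2
  rw [integral_Ioi_of_hasDerivAt_of_tendsto' (fun t _ => hderiv t)
    integrable_mul_exp_neg_sq.integrableOn hlim]
  ring

lemma integral_Iic_mul_exp_neg_sq : ∫ t in Iic 0, t * exp (-t ^ 2) = -(1 / 2) := by
  rw [← neg_zero, ← integral_comp_neg_Ioi]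
  simp [neg_mul, integral_neg, integral_Ioi_mul_exp_neg_sq 0]

lemma integral_Ioi_sq_mul_exp_neg_sq : ∫ t in Ioi 0, t ^ 2 * exp (-t ^ 2) = √π / 4 := by
  have h := integral_rpow_mul_exp_neg_rpow (p := 2) (q := 2) two_pos (by norm_num)
  simp only [rpow_two] at h
  rw [h, show ((2 : ℝ) + 1) / 2 = 1 / 2 + 1 by norm_num, Gamma_add_one (by norm_num),
    Gamma_one_half_eq]
  ring

lemma integral_Iic_sq_mul_exp_neg_sq : ∫ t in Iic 0, t ^ 2 * exp (-t ^ 2) = √π / 4 := by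
  rw [← neg_zero, ← integral_comp_neg_Ioi]
  simpa using integral_Ioi_sq_mul_exp_neg_sq

theorem abs_setIntegral_le_setIntegral_of_abs_le {α : Type*} [MeasurableSpace α]
    {μ : Measure α} {f g : α → ℝ} {s t : Set α} (hs : MeasurableSet s) (ht : MeasurableSet t)
    (hst : s ⊆ t) (hf : IntegrableOn f s μ) (hg : IntegrableOn g t μ)
    (hfg : ∀ x ∈ s, |f x| ≤ g x) (hg_nonneg : ∀ x ∈ t \ s, 0 ≤ g x) :
    |∫ x in s, f x ∂μ| ≤ ∫ x in t, g x ∂μ := by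
  have hg_nonneg' : ∀ x ∈ t, 0 ≤ g x := fun x hx => by
    by_cases hxs : x ∈ s
    · exact (abs_nonneg _).trans (hfg x hxs)
    · exact hg_nonneg x ⟨hx, hxs⟩
  calc |∫ x in s, f x ∂μ| ≤ ∫ x in s, |f x| ∂μ := abs_integral_le_integral_abs
    _ ≤ ∫ x in s, g x ∂μ := setIntegral_mono_on hf.abs (hg.mono_set hst) hs hfg
    _ ≤ ∫ x in t, g x ∂μ :=
      setIntegral_mono_set hg (ae_restrict_of_forall_mem ht hg_nonneg') hst.eventuallyLE

theorem integral_eq_Iic_add_Ioc_add_Ioc_add_Ioi {E : Type*} [NormedAddCommGroup E]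
    [NormedSpace ℝ E] {μ : Measure ℝ} {f : ℝ → E} (hf : Integrable f μ) {a b c : ℝ}
    (hab : a ≤ b) (hbc : b ≤ c) :
    ∫ x, f x ∂μ = ∫ x in Iic a, f x ∂μ + ∫ x in Ioc a b, f x ∂μ + ∫ x in Ioc b c, f x ∂μ
      + ∫ x in Ioi c, f x ∂μ := by
  rw [← intervalIntegral.integral_of_le hab, ← intervalIntegral.integral_of_le hbc, add_assoc,
    add_assoc, intervalIntegral.integral_interval_add_Ioi hf.integrableOn hf.integrableOn,
    intervalIntegral.integral_interval_add_Ioi hf.integrableOn hf.integrableOn,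
    intervalIntegral.integral_Iic_add_Ioi hf.integrableOn hf.integrableOn]

noncomputable def voigtIntegrand (γ ν t : ℝ) : ℝ :=
  exp (-t ^ 2) * (t * (2 * ν - t) / (γ ^ 2 + (ν - t) ^ 2))

lemma voigtIntegrand_neg_neg (γ ν t : ℝ) :
    voigtIntegrand γ (-ν) (-t) = voigtIntegrand γ ν t := by
  unfold voigtIntegrand
  ring_nf

lemma integral_voigtIntegrand_neg (γ ν : ℝ) :
    ∫ t, voigtIntegrand γ (-ν) t = ∫ t, voigtIntegrand γ ν t := by
  simp_rw [← integral_neg_eq_self (fun t => voigtIntegrand γ (-ν) t), voigtIntegrand_neg_neg]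

lemma integrable_voigtIntegrand {γ : ℝ} (hγ : 0 < γ) (ν : ℝ) : Integrable (voigtIntegrand γ ν) := by
  have hgauss : Integrable fun t : ℝ => exp (-t ^ 2) := by
    simpa using integrable_exp_neg_mul_sq one_pos
  refine hgauss.mul_bdd (c := ν ^ 2 / γ ^ 2 + 1)
    (by fun_prop : Measurable _).aestronglyMeasurable (ae_of_all _ fun t => ?_)
  have hden : 0 < γ ^ 2 + (ν - t) ^ 2 := by positivity
  have hratio : ν ^ 2 / γ ^ 2 * γ ^ 2 = ν ^ 2 := div_mul_cancel₀ _ (by positivity)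
  have hratio_nonneg : 0 ≤ ν ^ 2 / γ ^ 2 := by positivity
  rw [norm_div, Real.norm_eq_abs, Real.norm_of_nonneg hden.le, div_le_iff₀ hden,
    show t * (2 * ν - t) = ν ^ 2 - (ν - t) ^ 2 by ring, abs_le]
  constructor <;> nlinarith [mul_nonneg hratio_nonneg (sq_nonneg (ν - t)), sq_nonneg ν]

section Voigt

variable {γ ν : ℝ}

lemma abs_voigtIntegrand_le {t m d : ℝ} (hd : 0 < d) (hden : d ≤ γ ^ 2 + (ν - t) ^ 2)
    (hnum : |t * (2 * ν - t)| ≤ m) : |voigtIntegrand γ ν t| ≤ exp (-t ^ 2) * m / d := by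
  rw [voigtIntegrand, abs_mul, abs_exp, abs_div, abs_of_pos (hd.trans_le hden), mul_div_assoc]
  gcongr
  exact (abs_nonneg _).trans hnum

lemma abs_setIntegral_Iic_voigtIntegrand_le (hγ : 0 < γ) (hν : 0 ≤ ν) :
    |∫ t in Iic 0, voigtIntegrand γ ν t| ≤ (√π / 4 + ν) / (γ ^ 2 + ν ^ 2) := by
  have hC : 0 < γ ^ 2 + ν ^ 2 := by positivity
  set g := fun t : ℝ => (t ^ 2 * exp (-t ^ 2) - 2 * ν * (t * exp (-t ^ 2))) / (γ ^ 2 + ν ^ 2)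
  have hg : Integrable g :=
    (integrable_sq_mul_exp_neg_sq.sub (integrable_mul_exp_neg_sq.const_mul _)).div_const _
  have hpt (t : ℝ) (ht : t ∈ Iic 0) : |voigtIntegrand γ ν t| ≤ g t := by
    have ht : t ≤ 0 := ht
    refine (abs_voigtIntegrand_le (m := t ^ 2 - 2 * ν * t) hC ?_ ?_).trans_eq
      (by simp only [g]; ring)
    · nlinarith [mul_nonneg (neg_nonneg.2 ht) hν]
    · rw [abs_of_nonpos (mul_nonpos_of_nonpos_of_nonneg ht (by linarith))]
      exact le_of_eq (by ring)
  calc _ ≤ ∫ t in Iic 0, g t :=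
        abs_setIntegral_le_setIntegral_of_abs_le measurableSet_Iic measurableSet_Iic subset_rfl
          (integrable_voigtIntegrand hγ ν).integrableOn hg.integrableOn hpt (by simp)
    _ = _ := by
      rw [integral_div, integral_sub integrable_sq_mul_exp_neg_sq.integrableOn
        (integrable_mul_exp_neg_sq.const_mul _).integrableOn, integral_const_mul,
        integral_Iic_sq_mul_exp_neg_sq, integral_Iic_mul_exp_neg_sq]
      ring

lemma abs_setIntegral_Ioc_zero_voigtIntegrand_le {a : ℝ} (hγ : 0 < γ) (ha : 0 ≤ a)
    (ha1 : a ≤ 1) (hν : 0 ≤ ν) :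
    |∫ t in Ioc 0 (a * ν), voigtIntegrand γ ν t|
      ≤ (2 + a) * ν / (2 * (γ ^ 2 + (1 - a) ^ 2 * ν ^ 2)) := by
  have hC : 0 < γ ^ 2 + (1 - a) ^ 2 * ν ^ 2 := by positivity
  set g := fun t : ℝ => (2 + a) * ν * (t * exp (-t ^ 2)) / (γ ^ 2 + (1 - a) ^ 2 * ν ^ 2)
  have hg : Integrable g := (integrable_mul_exp_neg_sq.const_mul _).div_const _
  have hg_nonneg (t : ℝ) (ht : t ∈ Ioi 0) : 0 ≤ g t :=
    div_nonneg (mul_nonneg (by positivity) (mul_nonneg (le_of_lt ht) (exp_pos _).le)) hC.le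
  have hpt (t : ℝ) (ht : t ∈ Ioc 0 (a * ν)) : |voigtIntegrand γ ν t| ≤ g t := by
    obtain ⟨ht0, hta⟩ := ht
    have haν : a * ν ≤ ν := by nlinarith
    -- `|2ν - t| ≤ (2 + a)ν` rather than `2ν` gives the constant of the stated bound
    refine (abs_voigtIntegrand_le (m := (2 + a) * ν * t) hC ?_ ?_).trans_eq
      (by simp only [g]; ring)
    · nlinarith [mul_nonneg (sub_nonneg.2 hta) (by nlinarith : 0 ≤ ν - t + (1 - a) * ν)]
    · rw [abs_of_nonneg (mul_nonneg ht0.le (by linarith))]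
      nlinarith
  calc _ ≤ ∫ t in Ioi 0, g t :=
        abs_setIntegral_le_setIntegral_of_abs_le measurableSet_Ioc measurableSet_Ioi
          Ioc_subset_Ioi_self (integrable_voigtIntegrand hγ ν).integrableOn hg.integrableOn hpt
          fun t ht => hg_nonneg t ht.1
    _ = _ := by
      rw [integral_div, integral_const_mul, integral_Ioi_mul_exp_neg_sq, zero_pow two_ne_zero,
        neg_zero, exp_zero]
      field_simp

lemma abs_setIntegral_Ioc_voigtIntegrand_le {a : ℝ} (hγ : 0 < γ) (ha : 0 ≤ a) (ha2 : a ≤ 2)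
    (hν : 0 ≤ ν) :
    |∫ t in Ioc (a * ν) (2 * ν), voigtIntegrand γ ν t|
      ≤ (2 - a) * ν * exp (-a ^ 2 * ν ^ 2) / (2 * γ ^ 2) := by
  have hC : 0 < γ ^ 2 := by positivity
  set g := fun t : ℝ => (2 - a) * ν * (t * exp (-t ^ 2)) / γ ^ 2
  have hg : Integrable g := (integrable_mul_exp_neg_sq.const_mul _).div_const _
  have haν : 0 ≤ a * ν := mul_nonneg ha hν
  have hg_nonneg (t : ℝ) (ht : t ∈ Ioi (a * ν)) : 0 ≤ g t :=
    div_nonneg (mul_nonneg (mul_nonneg (by linarith) hν)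
      (mul_nonneg (haν.trans (le_of_lt ht)) (exp_pos _).le)) hC.le
  have hpt (t : ℝ) (ht : t ∈ Ioc (a * ν) (2 * ν)) : |voigtIntegrand γ ν t| ≤ g t := by
    obtain ⟨hta, ht2⟩ := ht
    refine (abs_voigtIntegrand_le (m := (2 - a) * ν * t) hC (by nlinarith) ?_).trans_eq
      (by simp only [g]; ring)
    rw [abs_of_nonneg (mul_nonneg (by linarith) (by linarith))]
    nlinarith
  calc _ ≤ ∫ t in Ioi (a * ν), g t :=
        abs_setIntegral_le_setIntegral_of_abs_le measurableSet_Ioc measurableSet_Ioi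
          Ioc_subset_Ioi_self (integrable_voigtIntegrand hγ ν).integrableOn hg.integrableOn hpt
          fun t ht => hg_nonneg t ht.1
    _ = _ := by
      rw [integral_div, integral_const_mul, integral_Ioi_mul_exp_neg_sq, mul_pow, neg_mul]
      ring

lemma abs_setIntegral_Ioi_voigtIntegrand_le (hγ : 0 < γ) (hν : 0 ≤ ν) :
    |∫ t in Ioi (2 * ν), voigtIntegrand γ ν t| ≤ √π / 4 / (γ ^ 2 + ν ^ 2) := by
  have hC : 0 < γ ^ 2 + ν ^ 2 := by positivity
  set g := fun t : ℝ => t ^ 2 * exp (-t ^ 2) / (γ ^ 2 + ν ^ 2)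
  have hpt (t : ℝ) (ht : t ∈ Ioi (2 * ν)) : |voigtIntegrand γ ν t| ≤ g t := by
    have ht : 2 * ν < t := ht
    refine (abs_voigtIntegrand_le (m := t ^ 2) hC (by nlinarith) ?_).trans_eq
      (by simp only [g]; ring)
    rw [abs_of_nonpos (mul_nonpos_of_nonneg_of_nonpos (by linarith) (by linarith))]
    nlinarith
  calc _ ≤ ∫ t in Ioi 0, g t :=
        abs_setIntegral_le_setIntegral_of_abs_le measurableSet_Ioi measurableSet_Ioi
          (Ioi_subset_Ioi (by linarith)) (integrable_voigtIntegrand hγ ν).integrableOn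
          (integrable_sq_mul_exp_neg_sq.div_const _).integrableOn hpt fun t _ => by positivity
    _ = _ := by rw [integral_div, integral_Ioi_sq_mul_exp_neg_sq]

lemma abs_integral_voigtIntegrand_le {a : ℝ} (hγ : 0 < γ) (ha : 0 ≤ a) (ha1 : a ≤ 1)
    (hν : 0 ≤ ν) :
    |∫ t, voigtIntegrand γ ν t|
      ≤ (√π / 4 + ν) / (γ ^ 2 + ν ^ 2) + (2 + a) * ν / (2 * (γ ^ 2 + (1 - a) ^ 2 * ν ^ 2))
        + (2 - a) * ν * exp (-a ^ 2 * ν ^ 2) / (2 * γ ^ 2) + √π / 4 / (γ ^ 2 + ν ^ 2) := by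
  rw [integral_eq_Iic_add_Ioc_add_Ioc_add_Ioi (integrable_voigtIntegrand hγ ν)
    (mul_nonneg ha hν) (by nlinarith : a * ν ≤ 2 * ν)]
  refine (abs_add_le _ _).trans (add_le_add ((abs_add_three _ _ _).trans
    (add_le_add (add_le_add ?_ ?_) ?_)) ?_)
  exacts [abs_setIntegral_Iic_voigtIntegrand_le hγ hν,
    abs_setIntegral_Ioc_zero_voigtIntegrand_le hγ ha ha1 hν,
    abs_setIntegral_Ioc_voigtIntegrand_le hγ ha (by linarith) hν,
    abs_setIntegral_Ioi_voigtIntegrand_le hγ hν]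

end Voigt

theorem voigt_uniform_error_bound (γ' a ν' : ℝ) (hγ : 0 < γ') (ha : 0 < a) (ha1 : a < 1) :
    |(1 / Real.sqrt Real.pi) * ∫ t : ℝ, Real.exp (-t ^ 2) *
        (t * (2 * ν' - t) / (γ' ^ 2 + (ν' - t) ^ 2))|
      ≤ (1 / (γ' ^ 2 + ν' ^ 2)) * (1 / 2 + |ν'| / Real.sqrt Real.pi)
        + (1 / (γ' ^ 2 + (1 - a) ^ 2 * ν' ^ 2)) * ((2 + a) * |ν'| / (2 * Real.sqrt Real.pi))
        + (1 / γ' ^ 2) * ((2 - a) * |ν'| / (2 * Real.sqrt Real.pi)) *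
            Real.exp (-a ^ 2 * ν' ^ 2) := by
  have hsymm : ∫ t, voigtIntegrand γ' ν' t = ∫ t, voigtIntegrand γ' |ν'| t := by
    rcases abs_choice ν' with h | h <;> rw [h]
    exact (integral_voigtIntegrand_neg γ' ν').symm
  have hbound := abs_integral_voigtIntegrand_le hγ ha.le ha1.le (abs_nonneg ν')
  rw [sq_abs] at hbound
  change |1 / √π * ∫ t, voigtIntegrand γ' ν' t| ≤ _
  rw [abs_mul, hsymm, abs_of_pos (by positivity)]
  refine (mul_le_mul_of_nonneg_left hbound (by positivity)).trans_eq ?_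
  field_simp
  ring
end

section
/- Far-wing uniform bound: for fixed n₁ > 0 and any ε > 0 there exists n₃ > 0 such that for all γ̃ ≥ n₁·√(ln 2) and all ν̃ with |ν̃| > n₃·√(ln 2), the normalized Voigt relative error satisfies |(1/√π)·∫_{−∞}^{∞} e^{−t²}·t(2ν̃−t)/(γ̃²+(ν̃−t)²) dt| < ε. -/
open MeasureTheory Filter Topology Real

/-!
Split the integration at `|t| = |ν|/2`. Near the origin the denominator is at least `ν²/4`, so the
kernel is `O(|t|/|ν|)`; in the wings `e^{-t²} ≤ e^{-ν²/8} e^{-t²/2}` and the kernel is at most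
`5t²/γ²`. Either way the integrand is dominated by a multiple of the Gaussian `e^{-t²/4}`, giving
`|Ẽ_γ(ν)| ≤ 20/|ν| + 20 e^{-ν²/8}/γ²`, which tends to `0` as `|ν| → ∞` uniformly in `γ ≥ n₁√(ln 2)`.
-/

noncomputable def voigtKernel (γ ν t : ℝ) : ℝ := t * (2 * ν - t) / (γ ^ 2 + (ν - t) ^ 2)

lemma abs_le_exp_sq_div_four (t : ℝ) : |t| ≤ exp (t ^ 2 / 4) := by
  nlinarith [add_one_le_exp (t ^ 2 / 4), abs_nonneg t, sq_abs t, sq_nonneg (|t| - 2)]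

lemma sq_le_two_mul_exp_sq_div_four (t : ℝ) : t ^ 2 ≤ 2 * exp (t ^ 2 / 4) := by
  have h : exp (t ^ 2 / 4) = exp (t ^ 2 / 8) * exp (t ^ 2 / 8) := by
    rw [← exp_add]; ring_nf
  nlinarith [add_one_le_exp (t ^ 2 / 8), sq_nonneg (1 - t ^ 2 / 8), exp_pos (t ^ 2 / 8)]

lemma exp_neg_sq_mul_abs_le (t : ℝ) : exp (-t ^ 2) * |t| ≤ exp (-t ^ 2 / 4) :=
  calc exp (-t ^ 2) * |t| ≤ exp (-t ^ 2) * exp (t ^ 2 / 4) := by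
        gcongr; exact abs_le_exp_sq_div_four t
    _ ≤ exp (-t ^ 2 / 4) := by
        rw [← exp_add]; gcongr; nlinarith [sq_nonneg t]

lemma exp_neg_sq_mul_sq_le {ν t : ℝ} (h : ν ^ 2 ≤ 4 * t ^ 2) :
    exp (-t ^ 2) * t ^ 2 ≤ 2 * exp (-ν ^ 2 / 8) * exp (-t ^ 2 / 4) :=
  calc exp (-t ^ 2) * t ^ 2 ≤ exp (-t ^ 2) * (2 * exp (t ^ 2 / 4)) := by
        gcongr; exact sq_le_two_mul_exp_sq_div_four t
    _ = 2 * exp (-t ^ 2 / 2) * exp (-t ^ 2 / 4) := by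
        rw [mul_left_comm, ← exp_add, mul_assoc, ← exp_add]; ring_nf
    _ ≤ 2 * exp (-ν ^ 2 / 8) * exp (-t ^ 2 / 4) := by
        gcongr 2 * ?_ * _; exact exp_le_exp.2 (by linarith)

lemma abs_mul_two_mul_sub_le (ν t : ℝ) : |t * (2 * ν - t)| ≤ |t| * (2 * |ν| + |t|) := by
  rw [abs_mul]
  gcongr
  calc |2 * ν - t| ≤ |2 * ν| + |t| := abs_sub _ _
    _ = 2 * |ν| + |t| := by rw [abs_mul, abs_two]

lemma abs_voigtKernel_le_of_abs_le (γ : ℝ) {ν t : ℝ} (hν : ν ≠ 0) (ht : |t| ≤ |ν| / 2) :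
    |voigtKernel γ ν t| ≤ 10 / |ν| * |t| := by
  have hν' : 0 < |ν| := abs_pos.2 hν
  have hden : ν ^ 2 / 4 ≤ γ ^ 2 + (ν - t) ^ 2 := by
    nlinarith [abs_sub_abs_le_abs_sub ν t, sq_abs (ν - t), sq_abs ν, sq_nonneg γ, abs_nonneg t]
  have hnum : |t * (2 * ν - t)| ≤ |t| * (5 * |ν| / 2) := by
    nlinarith [abs_mul_two_mul_sub_le ν t, abs_nonneg t]
  calc |voigtKernel γ ν t| = |t * (2 * ν - t)| / (γ ^ 2 + (ν - t) ^ 2) := by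
        rw [voigtKernel, abs_div, abs_of_nonneg (by positivity : (0 : ℝ) ≤ γ ^ 2 + (ν - t) ^ 2)]
    _ ≤ |t| * (5 * |ν| / 2) / (ν ^ 2 / 4) := by gcongr
    _ = 10 / |ν| * |t| := by rw [← sq_abs ν]; field_simp; ring

lemma abs_voigtKernel_le_of_lt_abs {γ : ℝ} (ν : ℝ) {t : ℝ} (hγ : γ ≠ 0) (ht : |ν| / 2 < |t|) :
    |voigtKernel γ ν t| ≤ 5 / γ ^ 2 * t ^ 2 := by
  have hnum : |t * (2 * ν - t)| ≤ 5 * t ^ 2 := by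
    nlinarith [abs_mul_two_mul_sub_le ν t, abs_nonneg t, sq_abs t, abs_nonneg ν]
  calc |voigtKernel γ ν t| = |t * (2 * ν - t)| / (γ ^ 2 + (ν - t) ^ 2) := by
        rw [voigtKernel, abs_div, abs_of_nonneg (by positivity : (0 : ℝ) ≤ γ ^ 2 + (ν - t) ^ 2)]
    _ ≤ 5 * t ^ 2 / γ ^ 2 := by gcongr; nlinarith [sq_nonneg (ν - t)]
    _ = 5 / γ ^ 2 * t ^ 2 := by ring

lemma abs_exp_neg_sq_mul_voigtKernel_le {γ ν : ℝ} (hγ : γ ≠ 0) (hν : ν ≠ 0) (t : ℝ) :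
    |exp (-t ^ 2) * voigtKernel γ ν t| ≤
      (10 / |ν| + 10 * exp (-ν ^ 2 / 8) / γ ^ 2) * exp (-t ^ 2 / 4) := by
  rw [abs_mul, abs_of_pos (exp_pos _)]
  have hwing : 0 ≤ 10 * exp (-ν ^ 2 / 8) / γ ^ 2 * exp (-t ^ 2 / 4) := by positivity
  have hcore : 0 ≤ 10 / |ν| * exp (-t ^ 2 / 4) := by positivity
  rcases le_or_gt |t| (|ν| / 2) with ht | ht
  · calc exp (-t ^ 2) * |voigtKernel γ ν t| ≤ exp (-t ^ 2) * (10 / |ν| * |t|) := by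
          gcongr; exact abs_voigtKernel_le_of_abs_le γ hν ht
      _ = 10 / |ν| * (exp (-t ^ 2) * |t|) := by ring
      _ ≤ 10 / |ν| * exp (-t ^ 2 / 4) := by gcongr; exact exp_neg_sq_mul_abs_le t
      _ ≤ _ := by linarith
  · have hνt : ν ^ 2 ≤ 4 * t ^ 2 := by nlinarith [sq_abs ν, sq_abs t, abs_nonneg ν]
    calc exp (-t ^ 2) * |voigtKernel γ ν t| ≤ exp (-t ^ 2) * (5 / γ ^ 2 * t ^ 2) := by
          gcongr; exact abs_voigtKernel_le_of_lt_abs ν hγ ht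
      _ = 5 / γ ^ 2 * (exp (-t ^ 2) * t ^ 2) := by ring
      _ ≤ 5 / γ ^ 2 * (2 * exp (-ν ^ 2 / 8) * exp (-t ^ 2 / 4)) := by
          gcongr 5 / γ ^ 2 * ?_; exact exp_neg_sq_mul_sq_le hνt
      _ = 10 * exp (-ν ^ 2 / 8) / γ ^ 2 * exp (-t ^ 2 / 4) := by ring
      _ ≤ _ := by linarith

lemma norm_integral_le_of_norm_le_mul_exp_neg_mul_sq {E : Type*} [NormedAddCommGroup E]
    [NormedSpace ℝ E] {f : ℝ → E} {b C : ℝ} (hb : 0 < b)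
    (hf : ∀ t, ‖f t‖ ≤ C * exp (-b * t ^ 2)) : ‖∫ t, f t‖ ≤ C * √(π / b) :=
  calc ‖∫ t, f t‖ ≤ ∫ t, C * exp (-b * t ^ 2) :=
        norm_integral_le_of_norm_le ((integrable_exp_neg_mul_sq hb).const_mul C)
          (Eventually.of_forall hf)
    _ = C * √(π / b) := by rw [integral_const_mul, integral_gaussian]

lemma abs_voigt_integral_le {γ ν : ℝ} (hγ : γ ≠ 0) (hν : ν ≠ 0) :
    |(1 / √π) * ∫ t, exp (-t ^ 2) * voigtKernel γ ν t| ≤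
      20 / |ν| + 20 * exp (-ν ^ 2 / 8) / γ ^ 2 := by
  have hint := norm_integral_le_of_norm_le_mul_exp_neg_mul_sq
    (f := fun t ↦ exp (-t ^ 2) * voigtKernel γ ν t)
    (C := 10 / |ν| + 10 * exp (-ν ^ 2 / 8) / γ ^ 2) (by norm_num : (0 : ℝ) < 1 / 4)
    fun t ↦ (abs_exp_neg_sq_mul_voigtKernel_le hγ hν t).trans_eq (by ring_nf)
  have hsqrt : √(π / (1 / 4)) = 2 * √π := by
    rw [div_div_eq_mul_div, div_one, mul_comm, sqrt_mul (by norm_num : (0 : ℝ) ≤ 4),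
      show (4 : ℝ) = 2 ^ 2 by norm_num, sqrt_sq (by norm_num : (0 : ℝ) ≤ 2)]
  have hπ : 0 < √π := sqrt_pos.2 pi_pos
  rw [hsqrt, Real.norm_eq_abs] at hint
  rw [abs_mul, abs_of_pos (by positivity : 0 < 1 / √π), one_div_mul_eq_div, div_le_iff₀ hπ]
  exact hint.trans_eq (by ring)

lemma tendsto_voigt_bound (c : ℝ) :
    Tendsto (fun r : ℝ ↦ 20 / r + 20 * exp (-r ^ 2 / 8) / c ^ 2) atTop (𝓝 0) := by
  have hcore : Tendsto (fun r : ℝ ↦ 20 / r) atTop (𝓝 0) :=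
    tendsto_const_nhds.div_atTop tendsto_id
  have hwing : Tendsto (fun r : ℝ ↦ exp (-r ^ 2 / 8)) atTop (𝓝 0) := by
    simp_rw [neg_div]
    exact tendsto_exp_neg_atTop_nhds_zero.comp
      ((tendsto_pow_atTop two_ne_zero).atTop_div_const (by norm_num))
  simpa using hcore.add ((hwing.const_mul 20).div_const (c ^ 2))

theorem voigt_far_wing_uniform_bound (n₁ : ℝ) (hn₁ : 0 < n₁) :
    ∀ ε > 0, ∃ n₃ > 0, ∀ γ' : ℝ, n₁ * Real.sqrt (Real.log 2) ≤ γ' →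
      ∀ ν' : ℝ, n₃ * Real.sqrt (Real.log 2) < |ν'| →
        |(1 / Real.sqrt Real.pi) * ∫ t : ℝ, Real.exp (-t ^ 2) *
            (t * (2 * ν' - t) / (γ' ^ 2 + (ν' - t) ^ 2))| < ε := by
  intro ε hε
  have hlog : 0 < √(log 2) := sqrt_pos.2 (log_pos one_lt_two)
  have hc : 0 < n₁ * √(log 2) := mul_pos hn₁ hlog
  obtain ⟨R, hR⟩ := eventually_atTop.1
    ((tendsto_voigt_bound (n₁ * √(log 2))).eventually (gt_mem_nhds hε))
  refine ⟨max R 1 / √(log 2), by positivity, fun γ hγ ν hν ↦ ?_⟩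
  rw [div_mul_cancel₀ _ hlog.ne'] at hν
  have hν0 : ν ≠ 0 := abs_pos.1 (lt_of_le_of_lt (by positivity) hν)
  calc _ ≤ 20 / |ν| + 20 * exp (-ν ^ 2 / 8) / γ ^ 2 :=
        abs_voigt_integral_le (hc.trans_le hγ).ne' hν0
    _ ≤ 20 / |ν| + 20 * exp (-|ν| ^ 2 / 8) / (n₁ * √(log 2)) ^ 2 := by
        rw [sq_abs]; gcongr
    _ < ε := hR _ (le_max_left R 1 |>.trans hν.le)
end

section
/- The classical Voigt profile can be expressed via the Faddeeva function: f_V(ν) = √(ln2/π)·(1/α)·Re{w(x + iy)} where x = ν√(ln2)/α, y = γ√(ln2)/α, f_V = f_G ∗ f_L, and w(z) = (i/π)∫_{−∞}^{∞} e^{−t²}/(z−t) dt for Im z > 0. -/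
/-!
Substituting `t = (α / √(ln 2)) s` turns the Gaussian into `exp (-s²)` and the Lorentzian of
half-width `γ` centred at `ν` into a multiple of the one of half-width `y` centred at `x`.
On the other side `Re (i / (x + i y - s)) = y / ((x - s)² + y²)`, so `π · Re w(x + i y)` is the
same Lorentzian average of `exp (-s²)`.
-/

open MeasureTheory Complex

/-- The Faddeeva function for `Im z > 0`, via its integral representation. -/
noncomputable def faddeeva (z : ℂ) : ℂ :=
  (I / Real.pi) * ∫ t : ℝ, Complex.exp (-(t : ℂ) ^ 2) / (z - (t : ℂ))

theorem integrable_cexp_neg_sq_div_sub {z : ℂ} (hz : z.im ≠ 0) :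
    Integrable fun t : ℝ => cexp (-(t : ℂ) ^ 2) / (z - t) := by
  have hbound : ∀ t : ℝ, |z.im| ≤ ‖z - t‖ := fun t => by
    simpa using abs_im_le_norm (z - t)
  have hpos : 0 < |z.im| := abs_pos.mpr hz
  have hcont : Continuous fun t : ℝ => cexp (-(t : ℂ) ^ 2) / (z - t) :=
    .div (by fun_prop) (by fun_prop) fun t => norm_pos_iff.mp (hpos.trans_le (hbound t))
  refine ((integrable_exp_neg_mul_sq one_pos).const_mul |z.im|⁻¹).mono'
    hcont.aestronglyMeasurable (.of_forall fun t => ?_)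
  rw [norm_div, norm_exp, ← ofReal_pow, ← ofReal_neg, ofReal_re, neg_one_mul, inv_mul_eq_div]
  exact div_le_div_of_nonneg_left (Real.exp_pos _).le hpos (hbound t)

theorem re_I_mul_cexp_neg_sq_div (x y t : ℝ) :
    (I * (cexp (-(t : ℂ) ^ 2) / (x + I * y - t))).re =
      Real.exp (-t ^ 2) * (y / ((x - t) ^ 2 + y ^ 2)) := by
  rw [I_mul_re, ← ofReal_pow, ← ofReal_neg, ← ofReal_exp, div_eq_mul_inv, im_ofReal_mul, inv_im,
    normSq_apply]
  simp only [sub_re, sub_im, add_re, add_im, ofReal_re, ofReal_im, mul_re, mul_im, I_re, I_im]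
  ring

theorem faddeeva_re_eq_integral (x : ℝ) {y : ℝ} (hy : y ≠ 0) :
    (faddeeva (x + I * y)).re =
      Real.pi⁻¹ * ∫ t : ℝ, Real.exp (-t ^ 2) * (y / ((x - t) ^ 2 + y ^ 2)) := by
  have hint := (integrable_cexp_neg_sq_div_sub (z := x + I * y) (by simpa using hy)).const_mul I
  rw [faddeeva, div_eq_inv_mul, mul_assoc, ← ofReal_inv, ← integral_const_mul I,
    re_ofReal_mul]
  congr 1
  exact (integral_re hint).symm.trans
    (integral_congr_ae (.of_forall (re_I_mul_cexp_neg_sq_div x y)))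

theorem integral_exp_neg_div_sq_mul_lorentzian {c : ℝ} (hc : 0 < c) (ν γ : ℝ) :
    ∫ t : ℝ, Real.exp (-(t / c) ^ 2) * (γ / ((ν - t) ^ 2 + γ ^ 2)) =
      ∫ s : ℝ, Real.exp (-s ^ 2) * ((γ / c) / ((ν / c - s) ^ 2 + (γ / c) ^ 2)) := by
  have hscale := Measure.integral_comp_mul_left
    (fun t => Real.exp (-(t / c) ^ 2) * (γ / ((ν - t) ^ 2 + γ ^ 2))) c
  have hpt : ∀ s : ℝ, Real.exp (-(c * s / c) ^ 2) * (γ / ((ν - c * s) ^ 2 + γ ^ 2)) =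
      c⁻¹ * (Real.exp (-s ^ 2) * ((γ / c) / ((ν / c - s) ^ 2 + (γ / c) ^ 2))) := fun s => by
    have hden : (ν - c * s) ^ 2 + γ ^ 2 = c ^ 2 * ((ν / c - s) ^ 2 + (γ / c) ^ 2) := by
      field_simp
    rw [mul_div_cancel_left₀ s hc.ne', hden]
    generalize (ν / c - s) ^ 2 + (γ / c) ^ 2 = D
    ring
  simp only [hpt, integral_const_mul, abs_inv, abs_of_pos hc, smul_eq_mul] at hscale
  exact (mul_left_cancel₀ (inv_ne_zero hc.ne') hscale).symm

theorem voigt_via_faddeeva (α γ : ℝ) (hα : 0 < α) (hγ : 0 < γ) (ν : ℝ) :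
    let fG : ℝ → ℝ := fun t => Real.sqrt (Real.log 2 / Real.pi) * (1 / α) *
      Real.exp (-t ^ 2 * Real.log 2 / α ^ 2)
    let fL : ℝ → ℝ := fun s => (1 / Real.pi) * γ / (s ^ 2 + γ ^ 2)
    let fV : ℝ → ℝ := fun ν => ∫ t : ℝ, fG t * fL (ν - t)
    let x : ℝ := ν * Real.sqrt (Real.log 2) / α
    let y : ℝ := γ * Real.sqrt (Real.log 2) / α
    fV ν = Real.sqrt (Real.log 2 / Real.pi) * (1 / α) * (faddeeva (x + I * y)).re := by
  intro fG fL fV x y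
  set K := Real.sqrt (Real.log 2 / Real.pi) * (1 / α)
  have hlog : 0 < Real.log 2 := Real.log_pos one_lt_two
  have hsqrt : 0 < Real.sqrt (Real.log 2) := Real.sqrt_pos.mpr hlog
  set c := α / Real.sqrt (Real.log 2) with hc_def
  have hc : 0 < c := div_pos hα hsqrt
  have hx : ν / c = x := by simp only [c, x]; field_simp
  have hy : γ / c = y := by simp only [c, y]; field_simp
  have hintegrand : ∀ t, fG t * fL (ν - t) =
      K * Real.pi⁻¹ * (Real.exp (-(t / c) ^ 2) * (γ / ((ν - t) ^ 2 + γ ^ 2))) := fun t => by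
    have hexp : -t ^ 2 * Real.log 2 / α ^ 2 = -(t / c) ^ 2 := by
      rw [hc_def, div_div_eq_mul_div, div_pow, mul_pow, Real.sq_sqrt hlog.le]
      ring
    simp only [fG, fL, hexp]
    ring
  calc fV ν
        = K * Real.pi⁻¹ * ∫ t : ℝ, Real.exp (-(t / c) ^ 2) * (γ / ((ν - t) ^ 2 + γ ^ 2)) := by
        simp only [fV, hintegrand, integral_const_mul]
    _ = K * (Real.pi⁻¹ * ∫ s : ℝ, Real.exp (-s ^ 2) * (y / ((x - s) ^ 2 + y ^ 2))) := by
        rw [integral_exp_neg_div_sq_mul_lorentzian hc, hx, hy, mul_assoc]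
    _ = K * (faddeeva (x + I * y)).re := by
        rw [faddeeva_re_eq_integral x (by positivity)]
end

section
/- For Im z > 0, the imaginary part of i·w(z) is nonnegative, where w(z) = (i/π)∫_{−∞}^{∞} e^{−t²}/(z−t) dt; that is, i·w is a Herglotz function on the upper half-plane. -/
open MeasureTheory Complex

/-!
Since `i·w(z) = -(1/π) ∫ e^{-t²}/(z - t) dt`, `i·w` is `-1/π` times the Cauchy transform of the
Gaussian. The Cauchy transform of an integrable density is holomorphic off the real line by
differentiation under the integral sign, the kernel `1/(z - t)` and its derivative being bounded
by powers of `1/Im z` uniformly in `t`. For a nonnegative density it maps the upper half-plane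
into the closed lower one, since `Im (1/(z - t)) = -Im z / |z - t|²`.
-/

open Topology

namespace Complex

lemma im_le_norm_sub_ofReal (z : ℂ) (t : ℝ) : z.im ≤ ‖z - t‖ := by
  simpa using (le_abs_self _).trans (abs_im_le_norm (z - t))

lemma norm_inv_sub_ofReal_le {z : ℂ} (hz : 0 < z.im) (t : ℝ) : ‖(z - t)⁻¹‖ ≤ z.im⁻¹ := by
  rw [norm_inv]
  exact inv_anti₀ hz (im_le_norm_sub_ofReal z t)

lemma sub_ofReal_ne_zero {z : ℂ} (hz : 0 < z.im) (t : ℝ) : z - t ≠ 0 :=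
  norm_pos_iff.mp (hz.trans_le (im_le_norm_sub_ofReal z t))

lemma im_ofReal_div_sub_ofReal_nonpos {c : ℝ} (hc : 0 ≤ c) {z : ℂ} (hz : 0 ≤ z.im) (t : ℝ) :
    ((c : ℂ) / (z - t)).im ≤ 0 := by
  have hq : 0 ≤ c * z.im / normSq (z - t) := div_nonneg (mul_nonneg hc hz) (normSq_nonneg _)
  simp only [div_im, ofReal_re, ofReal_im, zero_mul, zero_div, zero_sub, sub_im,
    sub_zero, mul_div_assoc] at hq ⊢
  linarith

lemma hasDerivAt_div_sub_ofReal (c : ℂ) {w : ℂ} {t : ℝ} (hw : w - t ≠ 0) :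
    HasDerivAt (fun w : ℂ => c / (w - t)) (-(c / (w - t) ^ 2)) w := by
  simpa [div_eq_mul_inv] using (((hasDerivAt_id w).sub_const (t : ℂ)).inv hw).const_mul c

end Complex

noncomputable def cauchyTransform (μ : Measure ℝ) (g : ℝ → ℂ) (z : ℂ) : ℂ :=
  ∫ t, g t / (z - t) ∂μ

section CauchyTransform

variable {μ : Measure ℝ}

lemma integrable_div_sub_ofReal {g : ℝ → ℂ} (hg : Integrable g μ) {z : ℂ} (hz : 0 < z.im) :
    Integrable (fun t : ℝ => g t / (z - t)) μ := by
  simp only [div_eq_mul_inv]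
  exact hg.mul_bdd (by fun_prop : Measurable fun t : ℝ => (z - t)⁻¹).aestronglyMeasurable
    (.of_forall (norm_inv_sub_ofReal_le hz))

lemma differentiableOn_cauchyTransform {g : ℝ → ℂ} (hg : Integrable g μ) :
    DifferentiableOn ℂ (cauchyTransform μ g) {z | 0 < z.im} := by
  intro z (hz : 0 < z.im)
  set s : Set ℂ := {w | z.im / 2 < w.im}
  have hs : s ∈ 𝓝 z := (isOpen_lt continuous_const continuous_im).mem_nhds (half_lt_self hz)
  have hs_pos : ∀ w ∈ s, 0 < w.im := fun w hw => (half_pos hz).trans hw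
  have h_bound : ∀ t : ℝ, ∀ w ∈ s, ‖-(g t / (w - t) ^ 2)‖ ≤ ‖g t‖ * (2 / z.im) ^ 2 := by
    intro t w hw
    have hnorm : z.im / 2 ≤ ‖w - t‖ := hw.le.trans (im_le_norm_sub_ofReal w t)
    rw [norm_neg, norm_div, norm_pow, div_eq_mul_inv, ← inv_div, inv_pow]
    gcongr
  have h_meas : AEStronglyMeasurable (fun t : ℝ => -(g t / (z - t) ^ 2)) μ := by
    simp only [div_eq_mul_inv]
    have h_kernel : Measurable fun t : ℝ => ((z - t) ^ 2)⁻¹ := by fun_prop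
    exact (hg.1.mul h_kernel.aestronglyMeasurable).neg
  exact (hasDerivAt_integral_of_dominated_loc_of_deriv_le hs
    (Filter.eventually_of_mem hs fun w hw => (integrable_div_sub_ofReal hg (hs_pos w hw)).1)
    (integrable_div_sub_ofReal hg hz) h_meas (.of_forall h_bound) (hg.norm.mul_const _)
    (.of_forall fun t w hw =>
      hasDerivAt_div_sub_ofReal (g t) (sub_ofReal_ne_zero (hs_pos w hw) t))
    ).2.differentiableAt.differentiableWithinAt

lemma im_cauchyTransform_nonpos {g : ℝ → ℝ} (hg : Integrable g μ) (hg₀ : 0 ≤ g) {z : ℂ}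
    (hz : 0 < z.im) : (cauchyTransform μ (fun t => g t) z).im ≤ 0 := by
  have hgc : Integrable (fun t => (g t : ℂ)) μ := hg.ofReal
  rw [cauchyTransform, ← RCLike.im_eq_complex_im,
    ← integral_im (integrable_div_sub_ofReal hgc hz)]
  exact integral_nonpos fun t => im_ofReal_div_sub_ofReal_nonpos (hg₀ t) hz.le t

end CauchyTransform

lemma I_mul_faddeeva (z : ℂ) :
    I * faddeeva z =
      ((-Real.pi⁻¹ : ℝ) : ℂ) * cauchyTransform volume (fun t => Real.exp (-t ^ 2)) z := by
  simp only [faddeeva, cauchyTransform, ofReal_exp]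
  push_cast
  rw [← mul_assoc, ← mul_div_assoc, I_mul_I]
  ring

theorem faddeeva_herglotz :
    DifferentiableOn ℂ (fun z => I * faddeeva z) {z : ℂ | 0 < z.im} ∧
    ∀ z : ℂ, 0 < z.im → 0 ≤ (I * faddeeva z).im := by
  have hgauss : Integrable (fun t : ℝ => Real.exp (-t ^ 2)) := by
    simpa using integrable_exp_neg_mul_sq one_pos
  simp only [I_mul_faddeeva]
  refine ⟨(differentiableOn_cauchyTransform hgauss.ofReal).const_mul _, fun z hz => ?_⟩
  rw [im_ofReal_mul]
  exact mul_nonneg_of_nonpos_of_nonpos (by simp [Real.pi_pos.le])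
    (im_cauchyTransform_nonpos hgauss (fun t => (Real.exp_pos _).le) hz)
end
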